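/- arXiv:1101.1883 — 3 statements merged into one kernel-verified Lean document; each statement's English description precedes it below -/
import Mathlib

section
/- Let A be a Noetherian integral domain and 𝔭 ⊂ A a prime ideal such that the quotient A/𝔭 has Krull dimension 1. Fix f ∈ A_𝔭 (the localization at 𝔭, viewed inside Frac A) and an integer r ≥ 1. Then for all but finitely many maximal ideals 𝔪 of A containing 𝔭, one has f ∈ A_𝔪 + 𝔭^r A_𝔭 (as subgroups of Frac A). -/
/-- The localization `A_q` of a domain `A` at (the complement of) a prime `q`,
viewed as a subset of the fraction field `K`. -/
def locAt (A K : Type*) [CommRing A] [Field K] [Algebra A K] (q : Ideal A) :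
    Set K :=
  {x : K | ∃ a s : A, s ∉ q ∧ x * algebraMap A K s = algebraMap A K a}

/-- The subset `I·A_q ⊆ K` generated by an ideal `I` in the localization of `A`
at the prime `q`, viewed inside the fraction field `K`. -/
def idealLocAt (A K : Type*) [CommRing A] [Field K] [Algebra A K]
    (I q : Ideal A) : Set K :=
  {x : K | ∃ a s : A, a ∈ I ∧ s ∉ q ∧ x * algebraMap A K s = algebraMap A K a}

/-! Writing `f = a / s` with `s ∉ 𝔭`, we have `f ∈ A_𝔪` whenever `s ∉ 𝔪`, so only the primes
containing `𝔭 + (s)` can fail. In the one-dimensional Noetherian domain `A/𝔭` the image of `s` is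
nonzero, so every prime containing it is maximal, hence minimal over it; there are finitely many
such minimal primes. -/

theorem zero_mem_idealLocAt {A K : Type*} [CommRing A] [Field K] [Algebra A K]
    (I : Ideal A) {q : Ideal A} (hq : q ≠ ⊤) : (0 : K) ∈ idealLocAt A K I q :=
  ⟨0, 1, I.zero_mem, (Ideal.ne_top_iff_one q).mp hq, by simp⟩

theorem Ideal.finite_setOf_isPrime_mem_of_krullDimLE_one {R : Type*} [CommRing R] [IsDomain R]
    [IsNoetherianRing R] [Ring.KrullDimLE 1 R] {s : R} (hs : s ≠ 0) :
    {q : Ideal R | q.IsPrime ∧ s ∈ q}.Finite := by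
  refine (Ideal.finite_minimalPrimes_of_isNoetherianRing R (Ideal.span {s})).subset ?_
  rintro q ⟨hq, hsq⟩
  have hspan : Ideal.span {s} ≤ q := (Ideal.span_singleton_le_iff_mem q).mpr hsq
  obtain ⟨q₀, hq₀, hq₀q⟩ := Ideal.exists_minimalPrimes_le hspan
  have hsq₀ : s ∈ q₀ := hq₀.1.2 (Ideal.mem_span_singleton_self s)
  have hq₀_max : q₀.IsMaximal :=
    hq₀.1.1.isMaximal_of_ne_bot fun h ↦ hs (by simpa [h] using hsq₀)
  rwa [hq₀_max.eq_of_le hq.ne_top hq₀q] at hq₀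

theorem Ideal.finite_setOf_isPrime_le_mem_of_krullDimLE_one {A : Type*} [CommRing A]
    [IsNoetherianRing A] {p : Ideal A} [p.IsPrime] [Ring.KrullDimLE 1 (A ⧸ p)]
    {s : A} (hs : s ∉ p) :
    {q : Ideal A | q.IsPrime ∧ p ≤ q ∧ s ∈ q}.Finite := by
  let π := Ideal.Quotient.mk p
  have hπs : π s ≠ 0 := fun h ↦ hs (Ideal.Quotient.eq_zero_iff_mem.mp h)
  refine ((Ideal.finite_setOf_isPrime_mem_of_krullDimLE_one hπs).image (Ideal.comap π)).subset ?_
  rintro q ⟨hq, hpq, hsq⟩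
  refine ⟨q.map π, ⟨?_, Ideal.mem_map_of_mem π hsq⟩, Ideal.comap_map_mk hpq⟩
  exact Ideal.map_isPrime_of_surjective Ideal.Quotient.mk_surjective (by rwa [Ideal.mk_ker])

theorem stmt_1_general (A : Type*) [CommRing A] [IsNoetherianRing A]
    (K : Type*) [Field K] [Algebra A K]
    (p : Ideal A) (hp : p.IsPrime) (hdim : ringKrullDim (A ⧸ p) = 1)
    (f : K) (hf : f ∈ locAt A K p) (r : ℕ) :
    {m : Ideal A | m.IsMaximal ∧ p ≤ m ∧
      ¬ ∃ g h : K, g ∈ locAt A K m ∧ h ∈ idealLocAt A K (p ^ r) p ∧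
        f = g + h}.Finite := by
  obtain ⟨a, s, hs, hfs⟩ := hf
  have : Ring.KrullDimLE 1 (A ⧸ p) := Ring.krullDimLE_iff.mpr hdim.le
  refine (Ideal.finite_setOf_isPrime_le_mem_of_krullDimLE_one hs).subset ?_
  rintro m ⟨hm, hpm, hbad⟩
  refine ⟨hm.isPrime, hpm, ?_⟩
  by_contra hsm
  exact hbad ⟨f, 0, ⟨a, s, hsm, hfs⟩, zero_mem_idealLocAt _ hp.ne_top, (add_zero f).symm⟩

/-- Let `A` be a Noetherian integral domain and `𝔭 ⊂ A` a prime ideal such that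
`A/𝔭` has Krull dimension 1.  Fix `f ∈ A_𝔭` (inside `Frac A`) and `r ≥ 1`.
Then for all but finitely many maximal ideals `𝔪 ⊇ 𝔭` one has
`f ∈ A_𝔪 + 𝔭^r A_𝔭` inside `Frac A`. -/
theorem stmt_1 (A : Type*) [CommRing A] [IsDomain A] [IsNoetherianRing A]
    (K : Type*) [Field K] [Algebra A K] [IsFractionRing A K]
    (p : Ideal A) (hp : p.IsPrime) (hdim : ringKrullDim (A ⧸ p) = 1)
    (f : K) (hf : f ∈ locAt A K p) (r : ℕ) (hr : 1 ≤ r) :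
    {m : Ideal A | m.IsMaximal ∧ p ≤ m ∧
      ¬ ∃ g h : K, g ∈ locAt A K m ∧ h ∈ idealLocAt A K (p ^ r) p ∧
        f = g + h}.Finite :=
  stmt_1_general A K p hp hdim f hf r
end

section
/- Let K be a field of characteristic zero and u ∈ K[[t]] a power series with u(0) = 0 and u'(0) ≠ 0 (i.e. u is another uniformizer of K[[t]]). Then for every Laurent series f ∈ K((t)), the coefficient of t^{−1} in f equals the coefficient of t^{−1} in (f ∘ u)·u', where f ∘ u denotes substitution of u into f. In other words, the residue map res(f dt) = coeff_{t^{−1}}(f) on Ω_{K((t))/K} is independent of the choice of uniformizer. -/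
open PowerSeries

/-- Formal derivative of a Laurent series. -/
noncomputable def lsDeriv {R : Type*} [CommRing R] (g : LaurentSeries R) :
    LaurentSeries R where
  coeff n := (n + 1) • g.coeff (n + 1)
  isPWO_support' := by
    have h1 : Function.support (fun n : ℤ => (n + 1) • g.coeff (n + 1))
        ⊆ (fun n : ℤ => n - 1) '' Function.support g.coeff := by
      intro n hn
      exact ⟨n + 1, fun h0 => hn (by simp [Function.mem_support, h0]), by ring⟩
    exact ((g.isPWO_support').image_of_monotone (fun _ _ h => by omega)).mono h1

/-- Substitution of a power series `u` with zero constant term into a power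
series `g` (`g ∘ u`), defined coefficientwise by finite sums. -/
noncomputable def psComp (K : Type*) [CommRing K] (u g : PowerSeries K) :
    PowerSeries K :=
  PowerSeries.mk fun m =>
    ∑ n ∈ Finset.range (m + 1), (coeff n g) * (coeff m (u ^ n))

/-!
Write `u = X v` with `v` a unit and `w = v⁻¹`. Then
`u ^ (-(k+1)) u' = X ^ (-(k+1)) w ^ (k+1) (X v)'`, so its residue is the `k`-th coefficient of
`w ^ (k+1) (X v)' = w ^ k + X w ^ (k+1) v'`. For `k = 0` this is `w(0) v(0) = 1`. For `k ≥ 1`,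
`X (w ^ k)' = -k X w ^ (k+1) v'`, and `X ∂` multiplies the `k`-th coefficient by `k`, so the two
terms cancel (this is where `char K = 0` is needed). The power-series part `(g ∘ u) u'` has no
negative coefficients, so both residues are `c 1`.
-/

open LaurentSeries HahnSeries

namespace PowerSeries

theorem coeff_X_mul_derivative {R : Type*} [CommSemiring R] (p : R⟦X⟧) (n : ℕ) :
    coeff n (X * d⁄dX R p) = n * coeff n p := by
  cases n with
  | zero => simp
  | succ n => rw [coeff_succ_X_mul, coeff_derivative]; push_cast; ring

theorem coeff_inv_pow_succ_mul_derivative_X_mul {K : Type*} [Field K] [CharZero K] {v : K⟦X⟧}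
    (hv : constantCoeff v ≠ 0) (k : ℕ) :
    coeff k (v⁻¹ ^ (k + 1) * d⁄dX K (X * v)) = if k = 0 then 1 else 0 := by
  have hinv : v⁻¹ * v = 1 := PowerSeries.inv_mul_cancel v hv
  have hsplit : v⁻¹ ^ (k + 1) * d⁄dX K (X * v) = v⁻¹ ^ k + X * (v⁻¹ ^ (k + 1) * d⁄dX K v) := by
    rw [Derivation.leibniz, derivative_X, smul_eq_mul, smul_eq_mul]
    linear_combination v⁻¹ ^ k * hinv
  rw [hsplit, map_add]
  rcases eq_or_ne k 0 with rfl | hk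
  · simp [coeff_zero_eq_constantCoeff_apply]
  have hderiv : X * d⁄dX K (v⁻¹ ^ k) = -((k : K) • (X * (v⁻¹ ^ (k + 1) * d⁄dX K v))) := by
    obtain ⟨m, rfl⟩ := Nat.exists_eq_add_one_of_ne_zero hk
    rw [Derivation.leibniz_pow, derivative_inv', Nat.add_sub_cancel, Nat.cast_smul_eq_nsmul,
      smul_eq_mul, nsmul_eq_mul, nsmul_eq_mul]
    ring
  have hcoeff := congrArg (coeff k) hderiv
  rw [coeff_X_mul_derivative, map_neg, LinearMap.map_smul, smul_eq_mul, ← mul_neg] at hcoeff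
  rw [if_neg hk]
  linear_combination (mul_left_cancel₀ (Nat.cast_ne_zero.mpr hk) hcoeff)

theorem coe_X_mul_zpow_neg {K : Type*} [Field K] {v : K⟦X⟧} (hv : constantCoeff v ≠ 0) (n : ℕ) :
    ((X * v : K⟦X⟧) : K⸨X⸩) ^ (-(n : ℤ)) = single (-(n : ℤ)) 1 * ((v⁻¹ ^ n : K⟦X⟧) : K⸨X⸩) := by
  have hinv : ((v⁻¹ : K⟦X⟧) : K⸨X⸩) = (v : K⸨X⸩)⁻¹ :=
    eq_inv_of_mul_eq_one_left (by rw [← coe_mul, PowerSeries.inv_mul_cancel v hv, coe_one])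
  rw [coe_mul, coe_X, mul_zpow, coe_pow, hinv, inv_pow, ← zpow_natCast, ← zpow_neg,
    ← RatFunc.single_zpow]

end PowerSeries

theorem lsDeriv_coe {R : Type*} [CommRing R] (p : R⟦X⟧) :
    lsDeriv (p : R⸨X⸩) = (d⁄dX R p : R⸨X⸩) := by
  ext n
  show (n + 1) • (p : R⸨X⸩).coeff (n + 1) = _
  rw [coeff_coe, coeff_coe, coeff_derivative]
  rcases lt_or_ge n 0 with hn | hn
  · rw [if_pos hn]
    rcases (Int.add_one_le_iff.mpr hn).lt_or_eq with hn' | hn'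
    · rw [if_pos hn', smul_zero]
    · rw [hn', zero_smul]
  · lift n to ℕ using hn
    rw [if_neg (by omega), if_neg (by omega), ← Nat.cast_succ, Int.natAbs_natCast,
      Int.natAbs_natCast, natCast_zsmul, nsmul_eq_mul, Nat.cast_succ, mul_comm]

theorem coeff_neg_one_zpow_mul_lsDeriv {K : Type*} [Field K] [CharZero K] {u : K⟦X⟧}
    (h0 : constantCoeff u = 0) (h1 : coeff 1 u ≠ 0) (k : ℕ) :
    ((u : K⸨X⸩) ^ (-(k + 1 : ℤ)) * lsDeriv (u : K⸨X⸩)).coeff (-1) = if k = 0 then 1 else 0 := by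
  obtain ⟨v, rfl⟩ := X_dvd_iff.mpr h0
  have hv : constantCoeff v ≠ 0 := by rwa [← coeff_zero_eq_constantCoeff_apply, ← coeff_succ_X_mul]
  rw [lsDeriv_coe, ← Nat.cast_succ, coe_X_mul_zpow_neg hv, mul_assoc, ← coe_mul,
    show (-1 : ℤ) = k + -((k + 1 : ℕ) : ℤ) by push_cast; ring, coeff_single_mul_add, one_mul,
    coeff_coe_powerSeries]
  exact coeff_inv_pow_succ_mul_derivative_X_mul hv k

theorem coeff_neg_one_add_sum_zpow_mul_lsDeriv {K : Type*} [Field K] [CharZero K] {u : K⟦X⟧}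
    (h0 : constantCoeff u = 0) (h1 : coeff 1 u ≠ 0) (p : K⟦X⟧) (N : ℕ) (c : ℕ → K) :
    (((p : K⸨X⸩) + ∑ k ∈ Finset.range N, c (k + 1) • (u : K⸨X⸩) ^ (-(k + 1 : ℤ))) *
      lsDeriv (u : K⸨X⸩)).coeff (-1) = if 0 < N then c 1 else 0 := by
  have hp : ((p : K⸨X⸩) * lsDeriv (u : K⸨X⸩)).coeff (-1) = 0 := by
    rw [lsDeriv_coe, ← coe_mul, coeff_coe, if_pos (by norm_num)]
  rw [add_mul, coeff_add, hp, zero_add, Finset.sum_mul, coeff_sum]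
  have hterm (k : ℕ) :
      (c (k + 1) • (u : K⸨X⸩) ^ (-(k + 1 : ℤ)) * lsDeriv (u : K⸨X⸩)).coeff (-1) =
        if k = 0 then c (k + 1) else 0 := by
    rw [← C_mul_eq_smul, mul_assoc, C_mul_eq_smul, HahnSeries.coeff_smul,
      coeff_neg_one_zpow_mul_lsDeriv h0 h1, smul_eq_mul, mul_ite, mul_one, mul_zero]
  rw [Finset.sum_congr rfl fun k _ => hterm k, Finset.sum_ite_eq' (Finset.range N) 0]
  simp only [Finset.mem_range, zero_add]

/-- Let `K` be a field of characteristic zero and `u ∈ K[[t]]` with `u(0) = 0`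
and `u'(0) ≠ 0` (another uniformizer).  For every Laurent series
`f ∈ K((t))`, written as `f = g + Σ_{k=1}^N c_k t^(−k)` with `g ∈ K[[t]]`,
the coefficient of `t^(−1)` in `f` equals the coefficient of `t^(−1)` in
`(f ∘ u)·u'`: the residue is independent of the choice of uniformizer. -/
theorem stmt_11 (K : Type*) [Field K] [CharZero K] (u : PowerSeries K)
    (h0 : constantCoeff u = 0) (h1 : coeff 1 u ≠ 0)
    (g : PowerSeries K) (N : ℕ) (c : ℕ → K) :
    (((g : LaurentSeries K) +
        ∑ k ∈ Finset.range N,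
          c (k + 1) • ((PowerSeries.X : PowerSeries K) : LaurentSeries K)
            ^ (-(k + 1 : ℤ))).coeff (-1))
    = ((((psComp K u g : PowerSeries K) : LaurentSeries K) +
        ∑ k ∈ Finset.range N,
          c (k + 1) • ((u : LaurentSeries K)) ^ (-(k + 1 : ℤ)))
        * lsDeriv (u : LaurentSeries K)).coeff (-1) := by
  have hX := coeff_neg_one_add_sum_zpow_mul_lsDeriv (u := X) constantCoeff_X (by simp) g N c
  rw [lsDeriv_coe, derivative_X, coe_one, mul_one] at hX
  rw [hX, coeff_neg_one_add_sum_zpow_mul_lsDeriv h0 h1]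
end

section
/- Let L/K be a finite field extension. Identify L((t)) as a finite field extension of K((t)) of the same degree. Then for every f = Σ_n a_n t^n ∈ L((t)), the trace Tr_{L((t))/K((t))}(f) is the Laurent series Σ_n Tr_{L/K}(a_n) t^n; i.e. the trace of L((t))/K((t)) is computed coefficientwise by the trace of L/K. -/
/-!
A `K`-basis `(bᵢ)` of `L` gives the `K⟦Γ⟧`-basis `(single 0 bᵢ)` of `L⟦Γ⟧`, whose coordinate
functions apply the coordinates of `b` coefficientwise. Writing both traces as
`Tr x = ∑ᵢ coordᵢ (x * bᵢ)`, multiplication by `single 0 bᵢ` also acts coefficientwise, so the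
`n`-th coefficient of each summand for `f ∈ L⟦Γ⟧` is the corresponding summand for `f.coeff n`.
-/

open HahnSeries

theorem Algebra.trace_eq_sum_repr_mul {R S ι : Type*} [CommRing R] [CommRing S] [Algebra R S]
    [Fintype ι] (b : Module.Basis ι R S) (s : S) :
    Algebra.trace R S s = ∑ i, b.repr (s * b i) i := by
  classical
  rw [Algebra.trace_eq_matrix_trace b, Matrix.trace]
  simp only [Matrix.diag_apply, Algebra.leftMulMatrix_eq_repr_mul]

section

variable {Γ : Type*} [AddCommMonoid Γ] [PartialOrder Γ] [IsOrderedCancelAddMonoid Γ]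
  {K L : Type*} [CommRing K] [CommRing L] [Algebra K L]

theorem HahnSeries.map_map_algebraMap_mul (φ : L →ₗ[K] K) (g : K⟦Γ⟧) (f : L⟦Γ⟧) :
    (g.map (algebraMap K L) * f).map φ = g * f.map φ := by
  ext n
  -- `map` only shrinks supports, so both products are sums over the antidiagonal of `g` and `f`
  rw [map_coeff, coeff_mul_left' g.isPWO_support fun _ hm h => hm (by simp [h]),
    coeff_mul_right' f.isPWO_support fun _ hm h => hm (by simp [h]), map_sum]
  refine Finset.sum_congr rfl fun ij _ => ?_
  rw [map_coeff, map_coeff, ← Algebra.smul_def, map_smul, smul_eq_mul]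

section CoefficientwiseAlgebra

variable [Algebra K⟦Γ⟧ L⟦Γ⟧]
  (hcompat : ∀ (g : K⟦Γ⟧) (n : Γ), (algebraMap K⟦Γ⟧ L⟦Γ⟧ g).coeff n = algebraMap K L (g.coeff n))

include hcompat in
theorem HahnSeries.algebraMap_eq_map (g : K⟦Γ⟧) :
    algebraMap K⟦Γ⟧ L⟦Γ⟧ g = g.map (algebraMap K L) := by
  ext n
  exact hcompat g n

include hcompat in
theorem HahnSeries.map_smul_eq_mul_map (φ : L →ₗ[K] K) (g : K⟦Γ⟧) (f : L⟦Γ⟧) :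
    (g • f).map φ = g * f.map φ := by
  rw [Algebra.smul_def, algebraMap_eq_map hcompat, map_map_algebraMap_mul]

variable {ι : Type*} [Fintype ι] (b : Module.Basis ι K L)

noncomputable def Module.Basis.hahnSeries : Module.Basis ι K⟦Γ⟧ L⟦Γ⟧ :=
  .ofEquivFun
    { toFun f i := f.map (b.coord i)
      invFun c := ∑ i, (c i).map (LinearMap.toSpanSingleton K L (b i))
      map_add' f g := by ext i n; simp
      map_smul' g f := by ext i : 1; exact map_smul_eq_mul_map hcompat (b.coord i) g f
      left_inv f := by ext n; simp [b.sum_repr]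
      right_inv c := by classical ext i n; simp [Finsupp.single_apply] }

theorem Module.Basis.hahnSeries_repr (f : L⟦Γ⟧) (i : ι) :
    (b.hahnSeries hcompat).repr f i = f.map (b.coord i) :=
  rfl

theorem Module.Basis.hahnSeries_apply (i : ι) : b.hahnSeries hcompat i = single 0 (b i) := by
  classical
  refine Module.Basis.apply_eq_iff.mpr ?_
  ext j n
  simp only [hahnSeries_repr, map_coeff, coeff_single, Finsupp.single_apply]
  split_ifs <;> simp_all [coeff_one]

include hcompat in
theorem HahnSeries.coeff_trace [Module.Free K L] [Module.Finite K L] (f : L⟦Γ⟧) (n : Γ) :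
    (Algebra.trace K⟦Γ⟧ L⟦Γ⟧ f).coeff n = Algebra.trace K L (f.coeff n) := by
  let b := Module.Free.chooseBasis K L
  rw [Algebra.trace_eq_sum_repr_mul (b.hahnSeries hcompat), Algebra.trace_eq_sum_repr_mul b,
    coeff_sum]
  refine Finset.sum_congr rfl fun i _ => ?_
  rw [Module.Basis.hahnSeries_repr, Module.Basis.hahnSeries_apply, map_coeff,
    coeff_mul_single_zero, Module.Basis.coord_apply]

end CoefficientwiseAlgebra

end

/-- Let `L/K` be a finite field extension, and identify `L((t))` as a finite
field extension of `K((t))` (the algebra structure is pinned down by being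
coefficientwise the inclusion `K → L`).  Then for every `f ∈ L((t))` the trace
`Tr_{L((t))/K((t))}(f)` is computed coefficientwise by `Tr_{L/K}`:
`(Tr f).coeff n = Tr_{L/K}(f.coeff n)` for all `n`. -/
theorem stmt_12 (K L : Type*) [Field K] [Field L] [Algebra K L]
    [FiniteDimensional K L]
    [Algebra (LaurentSeries K) (LaurentSeries L)]
    (hcompat : ∀ (g : LaurentSeries K) (n : ℤ),
      ((algebraMap (LaurentSeries K) (LaurentSeries L)) g).coeff n
        = algebraMap K L (g.coeff n))
    (f : LaurentSeries L) (n : ℤ) :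
    (Algebra.trace (LaurentSeries K) (LaurentSeries L) f).coeff n
      = Algebra.trace K L (f.coeff n) :=
  HahnSeries.coeff_trace hcompat f n
end
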